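/- Let A ⊆ ℕ be a classical normal set. For a ∈ ℕ define S_a = {b ∈ ℕ : a + b ∈ A and a·b ∈ A}. Then for every a ∈ ℕ, at least one of the sets S_a and S_{a²} has positive upper density; in particular, A contains pairs {a+b, a·b} with arbitrarily large a and b. -/

import Mathlib

/-!
Sets of natural density one form a filter, and it is preserved by pulling back along
`n ↦ a * n + b`. Suppose `S_a` and `S_{a²}` both have upper density zero. Dilating `S_a` by `a`
shows that `{n | a * n + a ∈ A}` and `{n | a² * n ∈ A}` almost never meet; as both have density
`1/2`, almost every `n` lies in one of them. Shifting `S_a` by one, the first alternative excludes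
`a + 1 + n ∈ A`, and by `S_{a²}` the second excludes `a² + n ∈ A`. Hence `a + 1 + n` and `a² + n`
almost never lie in `A` together, while normality gives this pattern density `1/4`.

That `A` has density `1/2` along every arithmetic progression follows from the vanishing of its
pair correlations by a van der Corput argument: summing over windows `x, x + q, …, x + (H-1) q`
and applying Cauchy–Schwarz bounds a progression sum of length `N` by `O(N √(q/H) + H)`.
-/

open Filter

open scoped Classical in
def ClassicalNormalSet (A : Set ℕ) : Prop :=
  ∀ K : Finset ℕ, K.Nonempty → (∀ k ∈ K, 0 < k) → ∀ B : ℕ → Bool,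
    Tendsto
      (fun n =>
        (((Finset.Icc 1 n).filter (fun m => ∀ k ∈ K, (k + m ∈ A ↔ B k = true))).card : ℝ) / n)
      atTop (nhds ((1 / 2 : ℝ) ^ K.card))

open scoped Classical in
noncomputable def upperDensity (V : Set ℕ) : ℝ :=
  limsup (fun N => (((Finset.Icc 1 N).filter (· ∈ V)).card : ℝ) / N) atTop

open Finset Asymptotics
open scoped Classical Topology

noncomputable def countUpTo (s : Set ℕ) (N : ℕ) : ℕ := #{n ∈ Icc 1 N | n ∈ s}

def HasNatDensity (s : Set ℕ) (d : ℝ) : Prop :=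
  Tendsto (fun N => (countUpTo s N : ℝ) / N) atTop (𝓝 d)

section NatDensity

variable {s t : Set ℕ} {d e : ℝ}

lemma countUpTo_le (s : Set ℕ) (N : ℕ) : countUpTo s N ≤ N :=
  (card_filter_le _ _).trans (by simp)

lemma countUpTo_mono (h : s ⊆ t) (N : ℕ) : countUpTo s N ≤ countUpTo t N :=
  card_le_card (monotone_filter_right _ fun _ _ hn => h hn)

lemma countUpTo_union_add_inter (s t : Set ℕ) (N : ℕ) :
    countUpTo (s ∪ t) N + countUpTo (s ∩ t) N = countUpTo s N + countUpTo t N := by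
  simp only [countUpTo, Set.mem_union, Set.mem_inter_iff, filter_or, filter_and]
  exact card_union_add_card_inter _ _

lemma countUpTo_compl_add (s : Set ℕ) (N : ℕ) : countUpTo sᶜ N + countUpTo s N = N := by
  simp only [countUpTo, Set.mem_compl_iff]
  rw [add_comm, card_filter_add_card_filter_not]
  simp

lemma countUpTo_eq_sum_range (s : Set ℕ) [DecidablePred (· ∈ s)] (N : ℕ) :
    (countUpTo s N : ℝ) = ∑ i ∈ range N, if i + 1 ∈ s then 1 else 0 := by
  rw [countUpTo, filter_congr_decidable, ← sum_boole, ← Ico_add_one_right_eq_Icc,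
    sum_Ico_eq_sum_range]
  simp [add_comm]

lemma countUpTo_preimage_le {φ : ℕ → ℕ} (hφ : φ.Injective) {N M : ℕ}
    (hmaps : ∀ n ∈ Icc 1 N, φ n ∈ Icc 1 M) : countUpTo (φ ⁻¹' s) N ≤ countUpTo s M :=
  card_le_card_of_injOn φ (fun n hn => by
    simp only [coe_filter, Set.mem_preimage] at hn ⊢
    exact ⟨hmaps n hn.1, hn.2⟩) hφ.injOn

lemma hasNatDensity_iff_isLittleO :
    HasNatDensity s d ↔ (fun N => (countUpTo s N : ℝ) - d * N) =o[atTop] (fun N => (N : ℝ)) := by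
  rw [isLittleO_iff_tendsto fun N hN => by simp_all [countUpTo], HasNatDensity,
    ← tendsto_sub_nhds_zero_iff]
  refine tendsto_congr' ((eventually_ne_atTop 0).mono fun N hN => ?_)
  simp only [sub_div, mul_div_assoc, div_self (Nat.cast_ne_zero.2 hN : (N : ℝ) ≠ 0), mul_one]

lemma HasNatDensity.unique (hd : HasNatDensity s d) (he : HasNatDensity s e) : d = e :=
  tendsto_nhds_unique hd he

lemma hasNatDensity_empty : HasNatDensity ∅ 0 := by
  simp [HasNatDensity, countUpTo]

lemma HasNatDensity.compl (h : HasNatDensity s d) : HasNatDensity sᶜ (1 - d) := by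
  have hN : Tendsto (fun N : ℕ => (N : ℝ) / N) atTop (𝓝 1) :=
    tendsto_const_nhds.congr' ((eventually_ne_atTop 0).mono fun N hN => by field_simp)
  refine (hN.sub h).congr fun N => ?_
  rw [← sub_div, sub_eq_iff_eq_add.2]
  exact_mod_cast (countUpTo_compl_add s N).symm

lemma HasNatDensity.union_add_inter {u : ℝ} (hs : HasNatDensity s d) (ht : HasNatDensity t e)
    (hst : HasNatDensity (s ∩ t) u) : HasNatDensity (s ∪ t) (d + e - u) := by
  refine ((hs.add ht).sub hst).congr fun N => ?_
  rw [← add_div, ← sub_div]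
  congr 1
  rw [sub_eq_iff_eq_add]
  exact_mod_cast (countUpTo_union_add_inter s t N).symm

lemma HasNatDensity.zero_of_subset (ht : HasNatDensity t 0) (h : s ⊆ t) : HasNatDensity s 0 :=
  squeeze_zero (fun N => by positivity)
    (fun N => div_le_div_of_nonneg_right (by exact_mod_cast countUpTo_mono h N) N.cast_nonneg) ht

lemma HasNatDensity.union_zero (hs : HasNatDensity s 0) (ht : HasNatDensity t 0) :
    HasNatDensity (s ∪ t) 0 := by
  simpa using hs.union_add_inter ht (hs.zero_of_subset Set.inter_subset_left)

lemma hasNatDensity_zero_of_upperDensity_nonpos (h : upperDensity s ≤ 0) :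
    HasNatDensity s 0 := by
  have hbdd : ∀ N, (countUpTo s N : ℝ) / N ∈ Set.Icc 0 1 := fun N =>
    ⟨by positivity, div_le_one_of_le₀ (by exact_mod_cast countUpTo_le s N) N.cast_nonneg⟩
  refine tendsto_of_le_liminf_of_limsup_le ?_ h ?_ ?_
  · exact le_liminf_of_le (isBoundedUnder_of ⟨1, fun N => (hbdd N).2⟩).isCoboundedUnder_flip
      (Eventually.of_forall fun N => (hbdd N).1)
  · exact isBoundedUnder_of ⟨1, fun N => (hbdd N).2⟩
  · exact isBoundedUnder_of ⟨0, fun N => (hbdd N).1⟩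

lemma hasNatDensity_Iio (a : ℕ) : HasNatDensity (Set.Iio a) 0 := by
  have hle (N : ℕ) : countUpTo (Set.Iio a) N ≤ a := by
    refine (card_le_card fun n hn => ?_).trans_eq (card_range a)
    simp only [mem_filter, Set.mem_Iio] at hn
    exact mem_range.2 hn.2
  refine squeeze_zero (fun N => by positivity) (fun N => ?_)
    (tendsto_const_div_atTop_nhds_zero_nat (a : ℝ))
  exact div_le_div_of_nonneg_right (by exact_mod_cast hle N) N.cast_nonneg

lemma tendsto_affine_atTop {a : ℕ} (ha : 0 < a) (b : ℕ) :
    Tendsto (fun n => a * n + b) atTop atTop :=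
  tendsto_atTop_mono (fun n => le_add_right (Nat.le_mul_of_pos_left n ha)) tendsto_id

def densityOne : Filter ℕ where
  sets := {s | HasNatDensity sᶜ 0}
  univ_sets := by simpa using hasNatDensity_empty
  sets_of_superset hs h := hs.zero_of_subset (Set.compl_subset_compl.2 h)
  inter_sets hs ht := by simpa [Set.compl_inter] using hs.union_zero ht

lemma mem_densityOne : s ∈ densityOne ↔ HasNatDensity sᶜ 0 := Iff.rfl

lemma eventually_densityOne_iff {p : ℕ → Prop} :
    (∀ᶠ n in densityOne, p n) ↔ HasNatDensity {n | ¬p n} 0 := Iff.rfl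

lemma densityOne_le_atTop : densityOne ≤ atTop := fun s hs => by
  obtain ⟨a, ha⟩ := mem_atTop_sets.1 hs
  exact (hasNatDensity_Iio a).zero_of_subset fun n hn => not_le.1 fun h => hn (ha n h)

lemma tendsto_affine_densityOne {a : ℕ} (ha : 0 < a) (b : ℕ) :
    Tendsto (fun n => a * n + b) densityOne densityOne := fun t ht => by
  rw [Filter.mem_map, mem_densityOne, ← Set.preimage_compl]
  have hcount (N : ℕ) : countUpTo ((fun n => a * n + b) ⁻¹' tᶜ) N ≤ countUpTo tᶜ (a * N + b) :=
    countUpTo_preimage_le (fun m n h => Nat.eq_of_mul_eq_mul_left ha (by simpa using h))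
      fun n hn => by
        simp only [mem_Icc] at hn ⊢
        exact ⟨by nlinarith, by nlinarith⟩
  have hlim : Tendsto (fun N : ℕ => ((a + b : ℕ) : ℝ) *
      ((countUpTo tᶜ (a * N + b) : ℝ) / (a * N + b : ℕ))) atTop (𝓝 0) := by
    simpa using ((mem_densityOne.1 ht).comp (tendsto_affine_atTop ha b)).const_mul _
  refine squeeze_zero' (Eventually.of_forall fun N => by positivity) ?_ hlim
  filter_upwards [eventually_ge_atTop 1] with N hN
  have hpos : (0 : ℝ) < (a * N + b : ℕ) := by norm_cast; positivity
  rw [mul_div_assoc', div_le_div_iff₀ (by positivity) hpos]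
  have hbound : ((a * N + b : ℕ) : ℝ) ≤ (a + b : ℕ) * N := by norm_cast; nlinarith
  calc (countUpTo _ N : ℝ) * (a * N + b : ℕ) ≤ countUpTo tᶜ (a * N + b) * ((a + b : ℕ) * N) :=
        mul_le_mul (by exact_mod_cast hcount N) hbound (by positivity) (by positivity)
    _ = _ := by ring

lemma HasNatDensity.frequently_densityOne (h : HasNatDensity s d) (hd : 0 < d) :
    ∃ᶠ n in densityOne, n ∈ s := fun hnot => by
  have h0 : HasNatDensity s 0 := by simpa using eventually_densityOne_iff.1 hnot
  exact hd.ne' (h.unique h0)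

lemma upperDensity_pos_of_frequently (h : ∃ᶠ n in densityOne, n ∈ s) : 0 < upperDensity s := by
  by_contra hnot
  exact h (eventually_densityOne_iff.2 (by
    simpa using hasNatDensity_zero_of_upperDensity_nonpos (not_lt.1 hnot)))

lemma eventually_mem_or_mem_densityOne (hs : HasNatDensity s d) (ht : HasNatDensity t e)
    (hde : d + e = 1) (h : ∀ᶠ n in densityOne, ¬(n ∈ s ∧ n ∈ t)) :
    ∀ᶠ n in densityOne, n ∈ s ∨ n ∈ t := by
  have hinter : HasNatDensity (s ∩ t) 0 := by simpa using eventually_densityOne_iff.1 h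
  have hunion := (hs.union_add_inter ht hinter).compl
  rw [sub_zero, hde, sub_self] at hunion
  exact eventually_densityOne_iff.2 hunion

end NatDensity

lemma isLittleO_const_natCast (C : ℝ) : (fun _ : ℕ => C) =o[atTop] (fun N : ℕ => (N : ℝ)) :=
  isLittleO_const_left.2 (Or.inr (tendsto_norm_atTop_atTop.comp tendsto_natCast_atTop_atTop))

lemma abs_sum_range_le {u : ℕ → ℝ} {C : ℝ} (hu : ∀ x, |u x| ≤ C) (M : ℕ) :
    |∑ x ∈ range M, u x| ≤ M * C :=
  (abs_sum_le_sum_abs _ _).trans (by simpa using sum_le_card_nsmul (range M) _ C fun x _ => hu x)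

lemma abs_sum_range_add_sub_le {u : ℕ → ℝ} {C : ℝ} (hu : ∀ x, |u x| ≤ C) (s M : ℕ) :
    |∑ x ∈ range M, u (x + s) - ∑ x ∈ range M, u x| ≤ 2 * s * C := by
  have hsplit : ∑ x ∈ range M, u (x + s) - ∑ x ∈ range M, u x =
      ∑ x ∈ range s, u (M + x) - ∑ x ∈ range s, u x := by
    have h₁ := sum_range_add u M s
    have h₂ := sum_range_add u s M
    rw [add_comm s M] at h₂
    simp only [add_comm _ s]
    linarith
  rw [hsplit]
  calc _ ≤ |∑ x ∈ range s, u (M + x)| + |∑ x ∈ range s, u x| := abs_sub _ _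
    _ ≤ s * C + s * C := add_le_add (abs_sum_range_le (fun x => hu (M + x)) s)
        (abs_sum_range_le hu s)
    _ = 2 * s * C := by ring

lemma isLittleO_sum_range_of_shift {u : ℕ → ℝ} {C : ℝ} (hu : ∀ x, |u x| ≤ C) (s : ℕ)
    (h : (fun M => ∑ x ∈ range M, u (x + s)) =o[atTop] (fun M : ℕ => (M : ℝ))) :
    (fun M => ∑ x ∈ range M, u x) =o[atTop] (fun M : ℕ => (M : ℝ)) := by
  have hdiff : (fun M => ∑ x ∈ range M, u (x + s) - ∑ x ∈ range M, u x) =o[atTop]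
      (fun M : ℕ => (M : ℝ)) :=
    (isBigO_of_le atTop fun M => (abs_sum_range_add_sub_le hu s M).trans (le_abs_self _))
      |>.trans_isLittleO (isLittleO_const_natCast _)
  exact (h.sub hdiff).congr_left fun M => by ring

section VanDerCorput

variable {f : ℕ → ℝ}

lemma eventually_sum_sq_sum_shift_le (hf : ∀ x, |f x| ≤ 1)
    (hcorr : ∀ h h', h ≠ h' →
      (fun M => ∑ x ∈ range M, f (x + h) * f (x + h')) =o[atTop] (fun M : ℕ => (M : ℝ)))
    (S : Finset ℕ) :
    ∀ᶠ M in atTop, ∑ x ∈ range M, (∑ h ∈ S, f (x + h)) ^ 2 ≤ (#S + 1) * M := by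
  set off : ℕ → ℝ := fun M => ∑ h ∈ S, ∑ h' ∈ S.erase h, ∑ x ∈ range M, f (x + h) * f (x + h')
  have hoff : off =o[atTop] (fun M : ℕ => (M : ℝ)) :=
    IsLittleO.fun_sum fun h _ => IsLittleO.fun_sum fun h' hh' =>
      hcorr h h' (ne_of_mem_erase hh').symm
  filter_upwards [hoff.bound one_pos] with M hM
  have hexpand : ∑ x ∈ range M, (∑ h ∈ S, f (x + h)) ^ 2 =
      ∑ h ∈ S, ∑ x ∈ range M, f (x + h) * f (x + h) + off M := by
    simp only [off, sq, sum_mul_sum, ← sum_add_distrib]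
    rw [sum_comm]
    refine sum_congr rfl fun h hh => ?_
    rw [sum_comm, ← add_sum_erase _ _ hh]
  have hdiag : ∑ h ∈ S, ∑ x ∈ range M, f (x + h) * f (x + h) ≤ #S * M := by
    have hsq (y : ℝ) (hy : |y| ≤ 1) : y * y ≤ 1 := by nlinarith [abs_mul_abs_self y, abs_nonneg y]
    simpa using sum_le_card_nsmul S _ _ fun h _ =>
      (sum_le_card_nsmul (range M) _ 1 fun x _ => hsq _ (hf (x + h))).trans_eq (by simp)
  have hoffM : off M ≤ M := (le_abs_self _).trans (by simpa using hM)
  rw [hexpand]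
  linarith

lemma abs_sum_sum_range_add_sub_le {F : ℕ → ℝ} (hF : ∀ n, |F n| ≤ 1) (N H : ℕ) :
    |∑ n ∈ range N, ∑ j ∈ range H, F (n + j) - H * ∑ n ∈ range N, F n| ≤ 2 * H ^ 2 := by
  have hH : (H : ℝ) * ∑ n ∈ range N, F n = ∑ _j ∈ range H, ∑ n ∈ range N, F n := by simp
  rw [sum_comm, hH, ← sum_sub_distrib]
  refine (abs_sum_le_sum_abs _ _).trans ?_
  calc _ ≤ ∑ j ∈ range H, 2 * (H : ℝ) * 1 := sum_le_sum fun j hj =>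
        (abs_sum_range_add_sub_le hF j N).trans (by gcongr; exact_mod_cast (mem_range.1 hj).le)
    _ = 2 * H ^ 2 := by simp; ring

lemma sq_sum_range_affine_le (G : ℕ → ℝ) {q : ℕ} (hq : 0 < q) (c N : ℕ) :
    (∑ n ∈ range N, G (q * n + c)) ^ 2 ≤ N * ∑ x ∈ range (q * N + c), G x ^ 2 := by
  have hinj : Set.InjOn (fun n => q * n + c) (range N) := fun m _ n _ h =>
    Nat.eq_of_mul_eq_mul_left hq (by simpa using h)
  calc _ ≤ N * ∑ n ∈ range N, G (q * n + c) ^ 2 := by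
        simpa using sq_sum_le_card_mul_sum_sq (s := range N) (f := fun n => G (q * n + c))
    _ = N * ∑ x ∈ (range N).image (fun n => q * n + c), G x ^ 2 := by rw [sum_image hinj]
    _ ≤ N * ∑ x ∈ range (q * N + c), G x ^ 2 := by
        refine mul_le_mul_of_nonneg_left
          (sum_le_sum_of_subset_of_nonneg ?_ fun _ _ _ => sq_nonneg _) N.cast_nonneg
        intro x hx
        obtain ⟨n, hn, rfl⟩ := mem_image.1 hx
        simp only [mem_range] at hn ⊢
        nlinarith

theorem isLittleO_sum_range_affine_of_correlations (hf : ∀ x, |f x| ≤ 1)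
    (hcorr : ∀ h h', h ≠ h' →
      (fun M => ∑ x ∈ range M, f (x + h) * f (x + h')) =o[atTop] (fun M : ℕ => (M : ℝ)))
    {q : ℕ} (hq : 0 < q) (c : ℕ) :
    (fun N => ∑ n ∈ range N, f (q * n + c)) =o[atTop] (fun N : ℕ => (N : ℝ)) := by
  -- With `U` the sum along the progression of the windows `∑ j < H, f (x + q j)`, one has
  -- `|U - H T| ≤ 2 H²` and, by Cauchy–Schwarz, `U² ≤ 4 q H N²`; choosing `H > 16 q / ε²` and
  -- `N ≥ 4 H / ε` then gives `T² ≤ (ε N)²`.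
  refine isLittleO_iff.2 fun ε hε => ?_
  obtain ⟨H, hH⟩ := exists_nat_gt (16 * q / ε ^ 2)
  have hHpos : (0 : ℝ) < H := lt_trans (by positivity) hH
  set S := (range H).image (q * ·)
  have hS : (#S : ℝ) + 1 ≤ 2 * H := by
    have h₁ : (#S : ℝ) ≤ H := by exact_mod_cast card_image_le.trans (card_range H).le
    have h₂ : (1 : ℝ) ≤ H := Nat.one_le_cast.2 (Nat.cast_pos.1 hHpos)
    linarith
  have hwindow (n : ℕ) : ∑ h ∈ S, f (q * n + c + h) = ∑ j ∈ range H, f (q * (n + j) + c) := by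
    rw [sum_image fun j _ j' _ h => Nat.eq_of_mul_eq_mul_left hq h]
    exact sum_congr rfl fun j _ => by ring_nf
  have hev := (tendsto_affine_atTop hq c).eventually (eventually_sum_sq_sum_shift_le hf hcorr S)
  obtain ⟨N₀, hN₀⟩ := exists_nat_ge (4 * H / ε)
  filter_upwards [hev, eventually_ge_atTop c, eventually_ge_atTop N₀] with N hsq hcN hN
  set T := ∑ n ∈ range N, f (q * n + c)
  set U := ∑ n ∈ range N, ∑ h ∈ S, f (q * n + c + h)
  have hUT : |U - H * T| ≤ 2 * H ^ 2 := by
    simpa only [U, hwindow] using abs_sum_sum_range_add_sub_le (fun n => hf (q * n + c)) N H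
  have hU : U ^ 2 ≤ 4 * q * H * N ^ 2 := by
    have hc : (q * N + c : ℕ) ≤ (2 * q * N : ℝ) := by
      push_cast
      nlinarith [(by exact_mod_cast hcN : (c : ℝ) ≤ N), (by exact_mod_cast hq : (1 : ℝ) ≤ q)]
    calc U ^ 2 ≤ N * ∑ x ∈ range (q * N + c), (∑ h ∈ S, f (x + h)) ^ 2 :=
          sq_sum_range_affine_le (fun x => ∑ h ∈ S, f (x + h)) hq c N
      _ ≤ N * ((2 * H) * (2 * q * N)) := by
          gcongr
          exact hsq.trans (mul_le_mul hS hc (by positivity) (by positivity))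
      _ = 4 * q * H * N ^ 2 := by ring
  have hTsq : (H * T) ^ 2 ≤ 8 * q * H * N ^ 2 + 8 * H ^ 4 := by
    have hUT' : (U - H * T) ^ 2 ≤ (2 * H ^ 2) ^ 2 := sq_le_sq' (abs_le.1 hUT).1 (abs_le.1 hUT).2
    nlinarith [sq_nonneg (U + (U - H * T))]
  have hεN : 4 * H ≤ ε * N := by
    rw [div_le_iff₀ hε] at hN₀; nlinarith [(by exact_mod_cast hN : (N₀ : ℝ) ≤ N)]
  have hqH : 16 * q ≤ ε ^ 2 * H := by rw [div_lt_iff₀ (by positivity)] at hH; linarith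
  have h₁ : 8 * q * H * N ^ 2 ≤ H ^ 2 * (ε * N) ^ 2 / 2 := by
    nlinarith [mul_le_mul_of_nonneg_right hqH (by positivity : (0 : ℝ) ≤ H * N ^ 2)]
  have h₂ : 8 * H ^ 4 ≤ H ^ 2 * (ε * N) ^ 2 / 2 := by
    nlinarith [mul_le_mul_of_nonneg_left (mul_le_mul hεN hεN (by positivity) (by positivity))
      (by positivity : (0 : ℝ) ≤ H ^ 2)]
  have : T ^ 2 ≤ (ε * N) ^ 2 := by
    refine le_of_mul_le_mul_left ?_ (by positivity : (0 : ℝ) < H ^ 2)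
    linarith [show H ^ 2 * T ^ 2 = (H * T) ^ 2 by ring]
  simpa [abs_of_nonneg hε.le] using abs_le_of_sq_le_sq this (by positivity)

end VanDerCorput

noncomputable def signIndicator (A : Set ℕ) (n : ℕ) : ℝ := if n ∈ A then 1 else -1

section Normal

variable {A : Set ℕ}

lemma abs_signIndicator_le (A : Set ℕ) (n : ℕ) : |signIndicator A n| ≤ 1 := by
  unfold signIndicator; split_ifs <;> simp

lemma signIndicator_mul (A : Set ℕ) (x y : ℕ) :
    signIndicator A x * signIndicator A y = 2 * (if (x ∈ A ↔ y ∈ A) then 1 else 0) - 1 := by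
  unfold signIndicator; by_cases hx : x ∈ A <;> by_cases hy : y ∈ A <;> simp [hx, hy] <;> norm_num

lemma ite_mem_eq_signIndicator (A : Set ℕ) (n : ℕ) :
    (if n ∈ A then (1 : ℝ) else 0) = (1 + signIndicator A n) / 2 := by
  unfold signIndicator; split_ifs <;> norm_num

lemma ClassicalNormalSet.hasNatDensity_pattern (hA : ClassicalNormalSet A) {k₁ k₂ : ℕ}
    (h₁ : 0 < k₁) (h₂ : 0 < k₂) (hne : k₁ ≠ k₂) (b₁ b₂ : Bool) :
    HasNatDensity {m | (k₁ + m ∈ A ↔ b₁) ∧ (k₂ + m ∈ A ↔ b₂)} (1 / 4) := by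
  have h := hA {k₁, k₂} (insert_nonempty _ _) (by simp [h₁, h₂])
    fun k => if k = k₁ then b₁ else b₂
  rw [card_pair hne, show ((1 : ℝ) / 2) ^ 2 = 1 / 4 by norm_num] at h
  refine h.congr fun N => ?_
  simp [countUpTo, Ne.symm hne]

lemma ClassicalNormalSet.isLittleO_sum_signIndicator_mul (hA : ClassicalNormalSet A) {h h' : ℕ}
    (hne : h ≠ h') :
    (fun M => ∑ x ∈ range M, signIndicator A (x + h) * signIndicator A (x + h')) =o[atTop]
      (fun M : ℕ => (M : ℝ)) := by
  -- Normality only sees the positions `k + m` with `k, m ≥ 1`, hence the shift by `2`.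
  set agree := {m | h + 1 + m ∈ A ↔ h' + 1 + m ∈ A}
  have hagree : HasNatDensity agree (1 / 2) := by
    have hpat b := hA.hasNatDensity_pattern h.succ_pos h'.succ_pos (by simpa using hne) b b
    have hdisj : {m | (h + 1 + m ∈ A ↔ true) ∧ (h' + 1 + m ∈ A ↔ true)} ∩
        {m | (h + 1 + m ∈ A ↔ false) ∧ (h' + 1 + m ∈ A ↔ false)} = ∅ := by
      ext m; simp; tauto
    convert (hpat true).union_add_inter (hpat false) (hdisj ▸ hasNatDensity_empty) using 1
    · ext m; simp only [agree, Set.mem_ofPred_eq, Set.mem_union]; simp; tauto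
    · norm_num
  have hbound (x : ℕ) : |signIndicator A (x + h) * signIndicator A (x + h')| ≤ 1 := by
    rw [abs_mul]
    exact mul_le_one₀ (abs_signIndicator_le A _) (abs_nonneg _) (abs_signIndicator_le A _)
  have hshift (M : ℕ) : ∑ x ∈ range M, signIndicator A (x + 2 + h) * signIndicator A (x + 2 + h') =
      2 * ((countUpTo agree M : ℝ) - 1 / 2 * M) := by
    have hterm (x : ℕ) : signIndicator A (x + 2 + h) * signIndicator A (x + 2 + h') =
        2 * (if x + 1 ∈ agree then 1 else 0) - 1 := by
      rw [signIndicator_mul, show x + 2 + h = h + 1 + (x + 1) by omega,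
        show x + 2 + h' = h' + 1 + (x + 1) by omega]
      rfl
    simp only [hterm, countUpTo_eq_sum_range, sum_sub_distrib, ← mul_sum, sum_const, card_range,
      nsmul_eq_mul, mul_one]
    ring
  refine isLittleO_sum_range_of_shift hbound 2 ?_
  simpa only [hshift] using (hasNatDensity_iff_isLittleO.1 hagree).const_mul_left 2

lemma ClassicalNormalSet.hasNatDensity_affine (hA : ClassicalNormalSet A) {q : ℕ} (hq : 0 < q)
    (r : ℕ) : HasNatDensity {n | q * n + r ∈ A} (1 / 2) := by
  have hsum := isLittleO_sum_range_affine_of_correlations (abs_signIndicator_le A)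
    (fun _ _ => hA.isLittleO_sum_signIndicator_mul) hq (q + r)
  refine hasNatDensity_iff_isLittleO.2 ((hsum.const_mul_left (1 / 2)).congr_left fun N => ?_)
  rw [countUpTo_eq_sum_range]
  simp only [Set.mem_ofPred_eq, show ∀ i, q * (i + 1) + r = q * i + (q + r) by intro; ring,
    ite_mem_eq_signIndicator, ← sum_div, sum_add_distrib, sum_const, card_range, nsmul_eq_mul,
    mul_one]
  ring

theorem ClassicalNormalSet.frequently_sum_mem_and_mul_mem (hA : ClassicalNormalSet A) {a : ℕ}
    (ha : 0 < a) :
    (∃ᶠ b in densityOne, a + b ∈ A ∧ a * b ∈ A) ∨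
      ∃ᶠ b in densityOne, a ^ 2 + b ∈ A ∧ a ^ 2 * b ∈ A := by
  by_contra hcon
  rw [not_or, not_frequently, not_frequently] at hcon
  obtain ⟨h₁, h₂⟩ := hcon
  have hshift := (tendsto_affine_densityOne one_pos 1).eventually h₁
  have hdil := (tendsto_affine_densityOne ha 0).eventually h₁
  have hcover := eventually_mem_or_mem_densityOne (hA.hasNatDensity_affine ha a)
    (hA.hasNatDensity_affine (pow_pos ha 2) 0) (by norm_num)
    (hdil.mono fun b hb => by simpa [add_comm, pow_two, mul_assoc] using hb)
  have hne : a + 1 ≠ a ^ 2 := by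
    rcases Nat.lt_or_ge a 2 with h | h
    · interval_cases a; decide
    · nlinarith
  refine (hA.hasNatDensity_pattern a.add_one_pos (pow_pos ha 2) hne true true)
    |>.frequently_densityOne (by norm_num) ?_
  filter_upwards [hshift, hcover, h₂] with b hs hc h2
  simp only [iff_true, not_and] at hs hc h2 ⊢
  intro hb hb'
  rcases hc with hc | hc
  · exact hs (by rwa [one_mul, ← add_assoc, add_right_comm]) (by rwa [one_mul, mul_add_one])
  · exact h2 hb' (by simpa using hc)

end Normal

/-- For a classical normal set `A ⊆ ℕ` and `S_a = {b : a + b ∈ A ∧ a·b ∈ A}`: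
for every `a ≥ 1`, at least one of `S_a`, `S_{a²}` has positive upper density;
in particular `A` contains pairs `{a+b, a·b}` with arbitrarily large `a` and `b`. -/
theorem pairs_sum_product
    (A : Set ℕ) (hA : ClassicalNormalSet A) :
    (∀ a : ℕ, 0 < a →
      0 < upperDensity {b : ℕ | a + b ∈ A ∧ a * b ∈ A} ∨
      0 < upperDensity {b : ℕ | a ^ 2 + b ∈ A ∧ a ^ 2 * b ∈ A}) ∧
    (∀ N : ℕ, ∃ a b : ℕ, N ≤ a ∧ N ≤ b ∧ a + b ∈ A ∧ a * b ∈ A) := by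
  refine ⟨fun a ha => (hA.frequently_sum_mem_and_mul_mem ha).imp
    upperDensity_pos_of_frequently upperDensity_pos_of_frequently, fun N => ?_⟩
  have hunbounded {p : ℕ → Prop} (h : ∃ᶠ b in densityOne, p b) : ∃ b, N ≤ b ∧ p b :=
    frequently_atTop.1 (h.filter_mono densityOne_le_atTop) N
  rcases hA.frequently_sum_mem_and_mul_mem N.succ_pos with h | h
  · obtain ⟨b, hb, hab⟩ := hunbounded h
    exact ⟨N + 1, b, N.le_succ, hb, hab⟩
  · obtain ⟨b, hb, hab⟩ := hunbounded h
    exact ⟨(N + 1) ^ 2, b, N.le_succ.trans (Nat.le_self_pow two_ne_zero _), hb, hab⟩
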